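/- arXiv:1806.01719 — 3 statements merged into one kernel-verified Lean document; each statement's English description precedes it below -/
import Mathlib

section
/- Let I_n denote the modified Bessel function of the first kind of order n, and set r_0(a) = I_1(a)/I_0(a). Then for all a > 0, r_0'(a) < (1 − r_0(a)²)/2. -/
open Real

/-- The modified Bessel function of the first kind of integer order `n`,
`I_n(a) = (1/π) ∫_0^π e^{a cos θ} cos(nθ) dθ`. -/
noncomputable def besselI (n : ℕ) (a : ℝ) : ℝ :=
  (1 / π) * ∫ θ in (0 : ℝ)..π, Real.exp (a * Real.cos θ) * Real.cos (n * θ)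

/-! With `M_k(a) = ∫₀^π e^{a cos θ} cos^k θ dθ` one has `π I₀ = M₀`, `π I₁ = M₁`,
`π I₂ = 2M₂ - M₀` and `M_k' = M_{k+1}`, so `r₀' = 1/2 + (I₀I₂ - I₁²)/(2I₀²) - r₀²/2` and the claim
is the Turán inequality `I₀I₂ < I₁²`. Integrating `(e^{a cos θ} sin θ)'` and
`(e^{a cos θ} sin θ cos θ)'` over `[0, π]` gives `M₁ = a(M₀ - M₂)` and `a(M₁ - M₃) = 2M₂ - M₀`,
whence `π²(I₁² - I₀I₂) = a(M₀M₃ - M₁M₂)`. Finally `Q = M₀M₃ - M₁M₂` vanishes at `a = 0`, where the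
odd moments vanish, and `Q' = M₀M₄ - M₂² > 0` by the strict Cauchy–Schwarz inequality, so `Q > 0`
for `a > 0`. -/

open MeasureTheory Set Filter

noncomputable def cosMoment (a : ℝ) (k : ℕ) : ℝ :=
  ∫ θ in (0 : ℝ)..π, exp (a * cos θ) * cos θ ^ k

lemma intervalIntegrable_exp_mul_cos_mul_pow (a : ℝ) (k : ℕ) :
    IntervalIntegrable (fun θ => exp (a * cos θ) * cos θ ^ k) volume 0 π :=
  (by fun_prop : Continuous _).intervalIntegrable _ _

lemma cosMoment_zero_pos (a : ℝ) : 0 < cosMoment a 0 := by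
  refine intervalIntegral.intervalIntegral_pos_of_pos
    (intervalIntegrable_exp_mul_cos_mul_pow a 0) (fun θ => ?_) pi_pos
  positivity

lemma besselI_zero_eq (a : ℝ) : besselI 0 a = cosMoment a 0 / π := by
  simp [besselI, cosMoment, div_eq_inv_mul]

lemma besselI_one_eq (a : ℝ) : besselI 1 a = cosMoment a 1 / π := by
  simp [besselI, cosMoment, div_eq_inv_mul]

lemma besselI_two_eq (a : ℝ) : besselI 2 a = (2 * cosMoment a 2 - cosMoment a 0) / π := by
  have h : ∀ θ, exp (a * cos θ) * cos ((2 : ℕ) * θ)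
      = 2 * (exp (a * cos θ) * cos θ ^ 2) - exp (a * cos θ) * cos θ ^ 0 := fun θ => by
    rw [Nat.cast_two, cos_two_mul]; ring
  rw [besselI, funext h, intervalIntegral.integral_sub
    ((intervalIntegrable_exp_mul_cos_mul_pow a 2).const_mul 2)
    (intervalIntegrable_exp_mul_cos_mul_pow a 0), intervalIntegral.integral_const_mul,
    cosMoment, cosMoment]
  ring

lemma hasDerivAt_cosMoment (k : ℕ) (a : ℝ) :
    HasDerivAt (cosMoment · k) (cosMoment a (k + 1)) a := by
  have hbound : ∀ θ, ∀ x ∈ Metric.ball a 1,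
      ‖cos θ ^ (k + 1) * exp (x * cos θ)‖ ≤ exp (|a| + 1) := by
    intro θ x hx
    have hx : |x| ≤ |a| + 1 := by
      have := abs_sub_abs_le_abs_sub x a
      rw [Metric.mem_ball, dist_eq] at hx
      linarith
    have hexp : exp (x * cos θ) ≤ exp (|a| + 1) := exp_le_exp.2 <| calc
      x * cos θ ≤ |x * cos θ| := le_abs_self _
      _ = |x| * |cos θ| := abs_mul _ _
      _ ≤ |x| := mul_le_of_le_one_right (abs_nonneg x) (abs_cos_le_one θ)
      _ ≤ |a| + 1 := hx
    rw [norm_mul, norm_pow, norm_eq_abs, norm_of_nonneg (exp_pos _).le]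
    exact (mul_le_of_le_one_left (exp_pos _).le
      (pow_le_one₀ (abs_nonneg _) (abs_cos_le_one θ))).trans hexp
  have h := intervalIntegral.hasDerivAt_integral_of_dominated_loc_of_deriv_le
    (μ := volume) (a := 0) (b := π)
    (F := fun x θ => exp (x * cos θ) * cos θ ^ k)
    (F' := fun x θ => cos θ ^ (k + 1) * exp (x * cos θ)) (bound := fun _ => exp (|a| + 1))
    (Metric.ball_mem_nhds a one_pos)
    (Eventually.of_forall fun x => (by fun_prop : Continuous _).aestronglyMeasurable)
    (intervalIntegrable_exp_mul_cos_mul_pow a k)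
    (by fun_prop : Continuous _).aestronglyMeasurable
    (ae_of_all _ fun θ _ => hbound θ) intervalIntegrable_const
    (ae_of_all _ fun θ _ x _ => by
      refine (((hasDerivAt_mul_const (cos θ)).exp).mul_const (cos θ ^ k)).congr_deriv ?_
      ring)
  exact h.2.congr_deriv (intervalIntegral.integral_congr fun θ _ => by ring)

lemma cosMoment_one_eq (a : ℝ) : cosMoment a 1 = a * (cosMoment a 0 - cosMoment a 2) := by
  have hI := intervalIntegrable_exp_mul_cos_mul_pow a
  have hderiv : ∀ θ ∈ uIcc 0 π, HasDerivAt (fun θ => exp (a * cos θ) * sin θ)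
      (exp (a * cos θ) * cos θ ^ 1
        - a * (exp (a * cos θ) * cos θ ^ 0 - exp (a * cos θ) * cos θ ^ 2)) θ := by
    intro θ _
    refine ((((hasDerivAt_cos θ).const_mul a).exp).mul (hasDerivAt_sin θ)).congr_deriv ?_
    linear_combination (-(a * exp (a * cos θ))) * sin_sq_add_cos_sq θ
  have hFTC := intervalIntegral.integral_eq_sub_of_hasDerivAt hderiv
    ((hI 1).sub (((hI 0).sub (hI 2)).const_mul a))
  rw [intervalIntegral.integral_sub (hI 1) (((hI 0).sub (hI 2)).const_mul a),
    intervalIntegral.integral_const_mul, intervalIntegral.integral_sub (hI 0) (hI 2)] at hFTC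
  simp only [sin_pi, sin_zero, mul_zero, sub_zero] at hFTC
  rw [cosMoment, cosMoment, cosMoment]
  linarith

lemma mul_cosMoment_one_sub_three (a : ℝ) :
    a * (cosMoment a 1 - cosMoment a 3) = 2 * cosMoment a 2 - cosMoment a 0 := by
  have hI := intervalIntegrable_exp_mul_cos_mul_pow a
  have hderiv : ∀ θ ∈ uIcc 0 π, HasDerivAt (fun θ => exp (a * cos θ) * sin θ * cos θ)
      (a * (exp (a * cos θ) * cos θ ^ 3 - exp (a * cos θ) * cos θ ^ 1)
        + (2 * (exp (a * cos θ) * cos θ ^ 2) - exp (a * cos θ) * cos θ ^ 0)) θ := by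
    intro θ _
    refine (((((hasDerivAt_cos θ).const_mul a).exp).mul (hasDerivAt_sin θ)).mul
      (hasDerivAt_cos θ)).congr_deriv ?_
    simp only [Pi.mul_apply]
    linear_combination (-(a * exp (a * cos θ) * cos θ + exp (a * cos θ))) * sin_sq_add_cos_sq θ
  have hFTC := intervalIntegral.integral_eq_sub_of_hasDerivAt hderiv
    ((((hI 3).sub (hI 1)).const_mul a).add (((hI 2).const_mul 2).sub (hI 0)))
  rw [intervalIntegral.integral_add (((hI 3).sub (hI 1)).const_mul a)
      (((hI 2).const_mul 2).sub (hI 0)),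
    intervalIntegral.integral_const_mul, intervalIntegral.integral_sub (hI 3) (hI 1),
    intervalIntegral.integral_sub ((hI 2).const_mul 2) (hI 0),
    intervalIntegral.integral_const_mul] at hFTC
  simp only [sin_pi, sin_zero, mul_zero, zero_mul, sub_zero] at hFTC
  rw [cosMoment, cosMoment, cosMoment, cosMoment]
  linarith

lemma cosMoment_two_sq_lt_mul (a : ℝ) : cosMoment a 2 ^ 2 < cosMoment a 0 * cosMoment a 4 := by
  have hI := intervalIntegrable_exp_mul_cos_mul_pow a
  have hquad : ∀ t, 0 < cosMoment a 0 * (t * t) + -2 * cosMoment a 2 * t + cosMoment a 4 := by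
    intro t
    have hexpand : (fun θ => exp (a * cos θ) * (cos θ ^ 2 - t) ^ 2) = fun θ =>
        t * t * (exp (a * cos θ) * cos θ ^ 0) - 2 * t * (exp (a * cos θ) * cos θ ^ 2)
          + exp (a * cos θ) * cos θ ^ 4 := by
      funext θ; ring
    have hint : cosMoment a 0 * (t * t) + -2 * cosMoment a 2 * t + cosMoment a 4
        = ∫ θ in (0 : ℝ)..π, exp (a * cos θ) * (cos θ ^ 2 - t) ^ 2 := by
      rw [hexpand, intervalIntegral.integral_add (((hI 0).const_mul _).sub ((hI 2).const_mul _))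
        (hI 4), intervalIntegral.integral_sub ((hI 0).const_mul _) ((hI 2).const_mul _),
        intervalIntegral.integral_const_mul, intervalIntegral.integral_const_mul,
        cosMoment, cosMoment, cosMoment]
      ring
    rw [hint]
    refine intervalIntegral.integral_pos pi_pos (by fun_prop) (fun θ _ => by positivity) ?_
    by_cases ht : t = 1
    · refine ⟨π / 2, ⟨by positivity, by linarith [pi_pos]⟩, ?_⟩
      simp [ht]
    · refine ⟨0, ⟨le_rfl, pi_pos.le⟩, ?_⟩
      simp only [cos_zero, one_pow]
      positivity
  have := discrim_lt_zero (cosMoment_zero_pos a).ne' hquad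
  rw [discrim] at this
  linarith

lemma cosMoment_one_mul_two_lt {a : ℝ} (ha : 0 < a) :
    cosMoment a 1 * cosMoment a 2 < cosMoment a 0 * cosMoment a 3 := by
  set Q : ℝ → ℝ := fun x => cosMoment x 0 * cosMoment x 3 - cosMoment x 1 * cosMoment x 2
  have hQ' : ∀ x, HasDerivAt Q (cosMoment x 0 * cosMoment x 4 - cosMoment x 2 ^ 2) x := fun x =>
    (((hasDerivAt_cosMoment 0 x).mul (hasDerivAt_cosMoment 3 x)).sub
      ((hasDerivAt_cosMoment 1 x).mul (hasDerivAt_cosMoment 2 x))).congr_deriv (by ring)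
  have hQ_mono := strictMono_of_hasDerivAt_pos hQ' fun x => sub_pos.2 (cosMoment_two_sq_lt_mul x)
  have hQ_zero : Q 0 = 0 := by
    simp [Q, cosMoment, integral_cos_pow (n := 1)]
  have := hQ_mono ha
  rw [hQ_zero] at this
  linarith

lemma besselI_zero_pos (a : ℝ) : 0 < besselI 0 a := by
  rw [besselI_zero_eq]
  exact div_pos (cosMoment_zero_pos a) pi_pos

lemma hasDerivAt_besselI_zero (a : ℝ) : HasDerivAt (besselI 0) (besselI 1 a) a := by
  rw [funext besselI_zero_eq, besselI_one_eq]
  exact (hasDerivAt_cosMoment 0 a).div_const π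

lemma hasDerivAt_besselI_one (a : ℝ) :
    HasDerivAt (besselI 1) ((besselI 0 a + besselI 2 a) / 2) a := by
  rw [funext besselI_one_eq, besselI_zero_eq, besselI_two_eq]
  exact ((hasDerivAt_cosMoment 1 a).div_const π).congr_deriv (by ring)

theorem besselI_zero_mul_besselI_two_lt_sq {a : ℝ} (ha : 0 < a) :
    besselI 0 a * besselI 2 a < besselI 1 a ^ 2 := by
  have hmoments : cosMoment a 1 ^ 2 - cosMoment a 0 * (2 * cosMoment a 2 - cosMoment a 0)
      = a * (cosMoment a 0 * cosMoment a 3 - cosMoment a 1 * cosMoment a 2) := by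
    linear_combination
      cosMoment a 1 * cosMoment_one_eq a + cosMoment a 0 * mul_cosMoment_one_sub_three a
  have key : besselI 1 a ^ 2 - besselI 0 a * besselI 2 a
      = a * (cosMoment a 0 * cosMoment a 3 - cosMoment a 1 * cosMoment a 2) / π ^ 2 := by
    rw [besselI_zero_eq, besselI_one_eq, besselI_two_eq, ← hmoments]
    ring
  have hpos := div_pos (mul_pos ha (sub_pos.2 (cosMoment_one_mul_two_lt ha))) (pow_pos pi_pos 2)
  linarith

lemma deriv_besselI_one_div_besselI_zero (a : ℝ) :
    deriv (fun t => besselI 1 t / besselI 0 t) a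
      = 1 / 2 + (besselI 0 a * besselI 2 a - besselI 1 a ^ 2) / (2 * besselI 0 a ^ 2)
        - (besselI 1 a / besselI 0 a) ^ 2 / 2 := by
  have h0 := (besselI_zero_pos a).ne'
  have h : HasDerivAt (fun t => besselI 1 t / besselI 0 t) _ a :=
    (hasDerivAt_besselI_one a).div (hasDerivAt_besselI_zero a) h0
  rw [h.deriv]
  field_simp
  ring

theorem bessel_ratio_deriv_lt (a : ℝ) (ha : 0 < a) :
    deriv (fun t => besselI 1 t / besselI 0 t) a <
      (1 - (besselI 1 a / besselI 0 a) ^ 2) / 2 := by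
  have hturan : (besselI 0 a * besselI 2 a - besselI 1 a ^ 2) / (2 * besselI 0 a ^ 2) < 0 :=
    div_neg_of_neg_of_pos (sub_neg.2 (besselI_zero_mul_besselI_two_lt_sq ha))
      (by have := besselI_zero_pos a; positivity)
  rw [deriv_besselI_one_div_besselI_zero]
  linarith
end

section
/- For a > 0, the Turán-type inequality I_0(a) I_2(a) < I_1(a)² holds, where I_n is the modified Bessel function of the first kind of order n. -/
open Real

/-!
Expanding `exp (a cos θ)` and integrating termwise against `cos nθ`, where
`∫₀^π cos^k θ cos nθ dθ = π 2⁻ᵏ C(k, (k - n)/2)` if `k - n` is even and nonnegative and `0`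
otherwise, gives `I_n(a) = ∑ₘ (a/2)^(2m+n) / (m! (m+n)!)`. Vandermonde's identity turns the Cauchy
product into `I_n I_m = ∑ₖ (a/2)^(2k+n+m) C(2k+n+m, k) / ((k+n)! (k+m)!)`, so the coefficients of
`I_0 I_2` and `I_1²` differ only in their denominators, and `k! (k+2)! > (k+1)!²`.
-/

open Nat Finset

/-- The number of `±1`-walks of length `k` from `0` to `n`, so that
`cos θ ^ k = 2⁻ᵏ ∑_{n ∈ ℤ} cosPowCoeff k |n| e^{inθ}`. -/
def cosPowCoeff (k n : ℕ) : ℕ :=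
  if n ≤ k ∧ Even (k - n) then k.choose ((k - n) / 2) else 0

theorem cosPowCoeff_zero_left (n : ℕ) : cosPowCoeff 0 n = if n = 0 then 1 else 0 := by
  by_cases hn : n = 0 <;> simp [cosPowCoeff, hn]

theorem cosPowCoeff_succ_zero (k : ℕ) : cosPowCoeff (k + 1) 0 = 2 * cosPowCoeff k 1 := by
  unfold cosPowCoeff
  simp only [Nat.even_iff]
  rcases Nat.even_or_odd' k with ⟨r, rfl | rfl⟩
  · rw [if_neg (by omega), if_neg (by omega)]
  · rw [if_pos (by omega), if_pos (by omega), show (2 * r + 1 + 1 - 0) / 2 = r + 1 by omega,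
      show (2 * r + 1 - 1) / 2 = r by omega, Nat.choose_succ_succ', ← Nat.choose_symm_half]
    ring

theorem cosPowCoeff_succ_succ (k n : ℕ) :
    cosPowCoeff (k + 1) (n + 1) = cosPowCoeff k n + cosPowCoeff k (n + 2) := by
  unfold cosPowCoeff
  simp only [Nat.even_iff]
  by_cases h : n ≤ k ∧ (k - n) % 2 = 0
  · obtain ⟨j, hj⟩ : ∃ j, k = n + 2 * j := ⟨(k - n) / 2, by omega⟩
    subst hj
    rcases j with _ | j
    · simp
    · rw [if_pos (by omega), if_pos (by omega), if_pos (by omega),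
        show (n + 2 * (j + 1) + 1 - (n + 1)) / 2 = j + 1 by omega,
        show (n + 2 * (j + 1) - n) / 2 = j + 1 by omega,
        show (n + 2 * (j + 1) - (n + 2)) / 2 = j by omega, Nat.choose_succ_succ', add_comm]
  · rw [if_neg (by omega), if_neg h, if_neg (by omega)]

theorem cosPowCoeff_two_mul_add (m n : ℕ) : cosPowCoeff (2 * m + n) n = (2 * m + n).choose m := by
  rw [cosPowCoeff, if_pos ⟨by omega, by simp⟩, show (2 * m + n - n) / 2 = m by omega]

theorem cosPowCoeff_eq_zero {k n : ℕ} (hk : k ∉ Set.range (fun m ↦ 2 * m + n)) :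
    cosPowCoeff k n = 0 := by
  rw [cosPowCoeff, if_neg]
  rintro ⟨hnk, j, hj⟩
  exact hk ⟨j, by dsimp only; omega⟩

theorem integral_cos_nat_mul (n : ℕ) :
    ∫ θ in (0 : ℝ)..π, cos (n * θ) = if n = 0 then π else 0 := by
  rcases n with _ | n
  · simp
  · have hn : ((n + 1 : ℕ) : ℝ) ≠ 0 := by positivity
    rw [intervalIntegral.integral_comp_mul_left (fun x ↦ cos x) hn, integral_cos,
      Real.sin_nat_mul_pi]
    simp

theorem cos_mul_cos_nat_succ_mul (θ : ℝ) (n : ℕ) :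
    cos θ * cos ((n + 1 : ℕ) * θ) = (cos (n * θ) + cos ((n + 2 : ℕ) * θ)) / 2 := by
  rw [add_comm (cos _), Real.cos_add_cos]
  push_cast
  ring_nf

theorem integral_cos_pow_mul_cos_nat_mul (k n : ℕ) :
    ∫ θ in (0 : ℝ)..π, cos θ ^ k * cos (n * θ) = π / 2 ^ k * cosPowCoeff k n := by
  have hint (j m : ℕ) :
      IntervalIntegrable (fun θ ↦ cos θ ^ j * cos (m * θ)) MeasureTheory.volume 0 π :=
    (by fun_prop : Continuous fun θ ↦ cos θ ^ j * cos (m * θ)).intervalIntegrable _ _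
  induction k generalizing n with
  | zero =>
    simp only [pow_zero, one_mul, integral_cos_nat_mul, cosPowCoeff_zero_left]
    split_ifs <;> simp
  | succ k ih =>
    rcases n with _ | n
    · have hfun : (fun θ ↦ cos θ ^ (k + 1) * cos ((0 : ℕ) * θ))
          = fun θ ↦ cos θ ^ k * cos ((1 : ℕ) * θ) := by
        ext θ; simp [pow_succ]
      rw [hfun, ih, cosPowCoeff_succ_zero]
      push_cast
      ring
    · have hfun : (fun θ ↦ cos θ ^ (k + 1) * cos ((n + 1 : ℕ) * θ))
          = fun θ ↦ (cos θ ^ k * cos (n * θ) + cos θ ^ k * cos ((n + 2 : ℕ) * θ)) / 2 := by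
        ext θ; rw [pow_succ, mul_assoc, cos_mul_cos_nat_succ_mul]; ring
      rw [hfun, intervalIntegral.integral_div, intervalIntegral.integral_add (hint k n) (hint k _),
        ih, ih, cosPowCoeff_succ_succ]
      push_cast
      ring

theorem hasSum_integral_exp_mul_cos_nat_mul (a : ℝ) (n : ℕ) :
    HasSum (fun k : ℕ ↦ a ^ k / k ! * ∫ θ in (0 : ℝ)..π, cos θ ^ k * cos (n * θ))
      (∫ θ in (0 : ℝ)..π, exp (a * cos θ) * cos (n * θ)) := by
  have hterms : (fun k : ℕ ↦ a ^ k / k ! * ∫ θ in (0 : ℝ)..π, cos θ ^ k * cos (n * θ))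
      = fun k : ℕ ↦ ∫ θ in (0 : ℝ)..π, (a * cos θ) ^ k / k ! * cos (n * θ) := by
    ext k
    rw [← intervalIntegral.integral_const_mul]
    congr 1 with θ
    ring
  rw [hterms]
  refine intervalIntegral.hasSum_integral_of_dominated_convergence (fun k _ ↦ |a| ^ k / k !)
    (fun k ↦ ?_) (fun k ↦ .of_forall fun θ _ ↦ ?_)
    (.of_forall fun _ _ ↦ Real.summable_pow_div_factorial |a|) intervalIntegrable_const
    (.of_forall fun θ _ ↦ ?_)
  · exact (by fun_prop : Continuous fun θ ↦ (a * cos θ) ^ k / k ! * cos (n * θ)).aestronglyMeasurable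
  · rw [norm_mul, norm_div, norm_pow, norm_mul, Real.norm_natCast, Real.norm_eq_abs,
      Real.norm_eq_abs, Real.norm_eq_abs]
    have := abs_cos_le_one θ
    have := abs_cos_le_one (n * θ)
    calc (|a| * |cos θ|) ^ k / k ! * |cos (n * θ)| ≤ (|a| * 1) ^ k / k ! * 1 := by gcongr
      _ = |a| ^ k / k ! := by ring
  · have hexp := NormedSpace.expSeries_div_hasSum_exp (𝔸 := ℝ) (a * cos θ)
    rw [← Real.exp_eq_exp_ℝ] at hexp
    exact hexp.mul_right _

theorem hasSum_besselI (n : ℕ) (a : ℝ) :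
    HasSum (fun m : ℕ ↦ (a / 2) ^ (2 * m + n) / (m ! * (m + n)!)) (besselI n a) := by
  have h := (hasSum_integral_exp_mul_cos_nat_mul a n).mul_left (1 / π)
  simp only [integral_cos_pow_mul_cos_nat_mul] at h
  have hinj : Function.Injective fun m ↦ 2 * m + n := fun _ _ h ↦ by dsimp only at h; omega
  rw [← hinj.hasSum_iff fun k hk ↦ by simp [cosPowCoeff_eq_zero hk]] at h
  have hterm (m : ℕ) : (a / 2) ^ (2 * m + n) / (m ! * (m + n)!)
      = 1 / π * (a ^ (2 * m + n) / (2 * m + n)! * (π / 2 ^ (2 * m + n) *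
        cosPowCoeff (2 * m + n) n)) := by
    rw [cosPowCoeff_two_mul_add, show 2 * m + n = m + (m + n) by ring, Nat.cast_add_choose]
    field_simp
    rw [← mul_pow, div_mul_cancel₀ a two_ne_zero]
  simp only [hterm]
  exact h

theorem summable_norm_besselI_series (n : ℕ) (x : ℝ) :
    Summable fun m : ℕ ↦ ‖x ^ (2 * m + n) / (m ! * (m + n)!)‖ := by
  refine .of_nonneg_of_le (fun _ ↦ norm_nonneg _) (fun m ↦ ?_)
    ((Real.summable_pow_div_factorial (x ^ 2)).mul_left (|x| ^ n))
  have hfac : (0 : ℝ) < m ! * (m + n)! := by positivity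
  rw [norm_div, norm_pow, Real.norm_of_nonneg hfac.le, Real.norm_eq_abs, pow_add, pow_mul, sq_abs,
    mul_comm ((x ^ 2) ^ m), mul_div_assoc]
  gcongr
  exact le_mul_of_one_le_right (by positivity) (mod_cast (m + n).factorial_pos)

theorem sum_antidiagonal_inv_factorial_mul (n m k : ℕ) :
    ∑ ij ∈ antidiagonal k, 1 / (ij.1 ! * (ij.1 + n)! : ℝ) * (1 / (ij.2 ! * (ij.2 + m)!))
      = (2 * k + n + m).choose k / ((k + n)! * (k + m)!) := by
  rw [show 2 * k + n + m = (k + m) + (k + n) by ring, Nat.add_choose_eq, Nat.cast_sum,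
    Finset.sum_div]
  refine Finset.sum_congr rfl fun ⟨i, j⟩ hij ↦ ?_
  obtain rfl : i + j = k := mem_antidiagonal.mp hij
  rw [show i + j + m = i + (j + m) by ring, show i + j + n = j + (i + n) by ring, Nat.cast_mul,
    Nat.cast_add_choose, Nat.cast_add_choose]
  field_simp

theorem hasSum_besselI_mul_besselI (n m : ℕ) (a : ℝ) :
    HasSum (fun k : ℕ ↦ (a / 2) ^ (2 * k + n + m) *
      ((2 * k + n + m).choose k / ((k + n)! * (k + m)!))) (besselI n a * besselI m a) := by
  have hn := summable_norm_besselI_series n (a / 2)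
  have hm := summable_norm_besselI_series m (a / 2)
  have h := (summable_norm_sum_mul_antidiagonal_of_summable_norm hn hm).of_norm.hasSum
  rw [← tsum_mul_tsum_eq_tsum_sum_antidiagonal_of_summable_norm hn hm,
    (hasSum_besselI n a).tsum_eq, (hasSum_besselI m a).tsum_eq] at h
  have hterm (k : ℕ) : (a / 2) ^ (2 * k + n + m) * ((2 * k + n + m).choose k / ((k + n)! * (k + m)!))
      = ∑ ij ∈ antidiagonal k, (a / 2) ^ (2 * ij.1 + n) / (ij.1 ! * (ij.1 + n)!) *
        ((a / 2) ^ (2 * ij.2 + m) / (ij.2 ! * (ij.2 + m)!)) := by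
    rw [← sum_antidiagonal_inv_factorial_mul, Finset.mul_sum]
    refine Finset.sum_congr rfl fun ⟨i, j⟩ hij ↦ ?_
    obtain rfl : i + j = k := mem_antidiagonal.mp hij
    ring
  simp only [hterm]
  exact h

theorem factorial_succ_mul_factorial_succ_lt (k : ℕ) : (k + 1)! * (k + 1)! < k ! * (k + 2)! := by
  have hpos : 0 < k ! * (k + 1)! := Nat.mul_pos k.factorial_pos (k + 1).factorial_pos
  calc (k + 1)! * (k + 1)! = (k + 1) * (k ! * (k + 1)!) := by rw [Nat.factorial_succ k]; ring
    _ < (k + 2) * (k ! * (k + 1)!) := Nat.mul_lt_mul_of_pos_right (by omega) hpos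
    _ = k ! * (k + 2)! := by rw [Nat.factorial_succ (k + 1)]; ring

theorem turan_inequality_besselI (a : ℝ) (ha : 0 < a) :
    besselI 0 a * besselI 2 a < besselI 1 a ^ 2 := by
  have hcoeff (k : ℕ) : (a / 2) ^ (2 * k + 0 + 2) * ((2 * k + 0 + 2).choose k / ((k + 0)! * (k + 2)!))
      < (a / 2) ^ (2 * k + 1 + 1) * ((2 * k + 1 + 1).choose k / ((k + 1)! * (k + 1)!)) := by
    have hchoose : 0 < (2 * k + 2).choose k := Nat.choose_pos (by omega)
    refine mul_lt_mul_of_pos_left (div_lt_div_of_pos_left (mod_cast hchoose) (by positivity)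
      (mod_cast factorial_succ_mul_factorial_succ_lt k)) (by positivity)
  rw [sq]
  exact hasSum_lt (fun k ↦ (hcoeff k).le) (hcoeff 0) (hasSum_besselI_mul_besselI 0 2 a)
    (hasSum_besselI_mul_besselI 1 1 a)
end

section
/- For each integer n ≥ 1, define ℐ_n(z) = Σ_{l=0}^∞ z^{2l} ((2l)!)^{n−1} / ((l!)^{2n} 2^{2ln}). Then with λ(n) = 1 for n ∈ {1,2} and λ(n) = (n−1)^{n−1}/(n/2)^n for n > 2, the function z ↦ exp(λ z²/2^{n+1}) / ℐ_n(z) is nondecreasing on [0,∞); consequently G̃(z) := λ z²/2^{n+1} − log ℐ_n(z) is nonnegative and nondecreasing on [0,∞) with G̃(0)=0. -/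
open Real

/-- `ℐ_n(z) = Σ_{l=0}^∞ z^{2l} ((2l)!)^{n−1} / ((l!)^{2n} 2^{2ln})`. -/
noncomputable def scriptI (n : ℕ) (z : ℝ) : ℝ :=
  ∑' l : ℕ, z ^ (2 * l) * ((2 * l).factorial : ℝ) ^ (n - 1) /
    (((l.factorial : ℝ)) ^ (2 * n) * 2 ^ (2 * l * n))

/-- `λ(n) = 1` for `n ∈ {1,2}` and `λ(n) = (n−1)^{n−1}/(n/2)^n` for `n > 2`. -/
noncomputable def lamConst (n : ℕ) : ℝ :=
  if n ≤ 2 then 1 else ((n : ℝ) - 1) ^ (n - 1) / ((n : ℝ) / 2) ^ n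

/-!
Both sides are power series in `t = z²` with positive coefficients: `ℐ_n` has coefficients
`a_l = ((2l)!)^{n-1} / ((l!)^{2n} 2^{2ln})` and the exponential has `b_l = c^l / l!` with
`c = λ / 2^{n+1}`. A quotient `∑ b_l t^l / ∑ a_l t^l` is nondecreasing on `t ≥ 0` as soon as
`b_l / a_l` is nondecreasing in `l` (symmetrize the double series of the cross-multiplied
inequality). Since `a_{l+1} / a_l = (2l+1)^{n-1} / ((l+1)^{n+1} 2^{n+1})`, that amounts to
`(2l+1)^{n-1} ≤ λ (l+1)^n`, which is AM-GM for `n - 1` copies of `(2l+1)/(n-1)` together with `1`.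
The claims about `G̃ = log (exp (…) / ℐ_n)` follow by taking logarithms, as `ℐ_n(0) = 1`.
-/

open scoped Nat

theorem pow_mul_pow_le_pow_mul_pow {x y : ℝ} (hx : 0 ≤ x) (hxy : x ≤ y) {i j : ℕ} (hij : i ≤ j) :
    x ^ j * y ^ i ≤ x ^ i * y ^ j := by
  have hy : 0 ≤ y := hx.trans hxy
  obtain ⟨k, rfl⟩ := Nat.exists_eq_add_of_le hij
  calc x ^ (i + k) * y ^ i = x ^ i * y ^ i * x ^ k := by ring
    _ ≤ x ^ i * y ^ i * y ^ k := by gcongr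
    _ = x ^ i * y ^ (i + k) := by ring

section PowerSeriesQuotient

variable {a b : ℕ → ℝ}

theorem mul_le_mul_of_monotone_div (ha : ∀ i, 0 < a i) (hba : Monotone fun i => b i / a i)
    {i j : ℕ} (hij : i ≤ j) : b i * a j ≤ b j * a i := by
  have := hba hij
  rwa [div_le_div_iff₀ (ha i) (ha j)] at this

theorem add_mul_pow_le_of_monotone_div (ha : ∀ i, 0 < a i) (hba : Monotone fun i => b i / a i)
    {x y : ℝ} (hx : 0 ≤ x) (hxy : x ≤ y) {i j : ℕ} (hij : i ≤ j) :
    b i * x ^ i * (a j * y ^ j) + b j * x ^ j * (a i * y ^ i) ≤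
      b i * y ^ i * (a j * x ^ j) + b j * y ^ j * (a i * x ^ i) := by
  have hcoeff : 0 ≤ b j * a i - b i * a j := sub_nonneg.2 (mul_le_mul_of_monotone_div ha hba hij)
  have hpow : 0 ≤ x ^ i * y ^ j - x ^ j * y ^ i :=
    sub_nonneg.2 (pow_mul_pow_le_pow_mul_pow hx hxy hij)
  linear_combination mul_nonneg hcoeff hpow

/-- The quotient of power series `∑ bᵢ tⁱ / ∑ aᵢ tⁱ` is monotone on `[0, ∞)` when `bᵢ / aᵢ` is. -/
theorem tsum_mul_tsum_le_of_monotone_div (ha : ∀ i, 0 < a i) (hb : ∀ i, 0 ≤ b i)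
    (hba : Monotone fun i => b i / a i) {x y : ℝ} (hx : 0 ≤ x) (hxy : x ≤ y)
    (hax : Summable fun i => a i * x ^ i) (hay : Summable fun i => a i * y ^ i)
    (hbx : Summable fun i => b i * x ^ i) (hby : Summable fun i => b i * y ^ i) :
    (∑' i, b i * x ^ i) * (∑' i, a i * y ^ i) ≤ (∑' i, b i * y ^ i) * (∑' i, a i * x ^ i) := by
  have hy : 0 ≤ y := hx.trans hxy
  set D : ℕ × ℕ → ℝ := fun p => b p.1 * x ^ p.1 * (a p.2 * y ^ p.2)
  set E : ℕ × ℕ → ℝ := fun p => b p.1 * y ^ p.1 * (a p.2 * x ^ p.2)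
  have hD : Summable D := hbx.mul_of_nonneg hay (fun i => by have := hb i; positivity)
    (fun i => by have := (ha i).le; positivity)
  have hE : Summable E := hby.mul_of_nonneg hax (fun i => by have := hb i; positivity)
    (fun i => by have := (ha i).le; positivity)
  have hswap : ∀ f : ℕ × ℕ → ℝ, ∑' p : ℕ × ℕ, f p.swap = ∑' p, f p :=
    fun f => (Equiv.prodComm ℕ ℕ).tsum_eq f
  have hpair : ∀ p, D p + D p.swap ≤ E p + E p.swap := by
    rintro ⟨i, j⟩
    rcases le_total i j with hij | hji
    · exact add_mul_pow_le_of_monotone_div ha hba hx hxy hij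
    · have := add_mul_pow_le_of_monotone_div ha hba hx hxy hji
      simp only [D, E, Prod.swap_prod_mk]
      linarith
  have hDs : Summable fun p : ℕ × ℕ => D p.swap := hD.comp_injective Prod.swap_injective
  have hEs : Summable fun p : ℕ × ℕ => E p.swap := hE.comp_injective Prod.swap_injective
  have hsum := (hD.add hDs).tsum_le_tsum hpair (hE.add hEs)
  rw [hD.tsum_add hDs, hE.tsum_add hEs, hswap D, hswap E] at hsum
  rw [hbx.tsum_mul_tsum hay hD, hby.tsum_mul_tsum hax hE]
  linarith

end PowerSeriesQuotient

theorem div_pow_le_add_one_div_pow {m : ℕ} (hm : 0 < m) {a : ℝ} (ha : 0 ≤ a) :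
    (a / m) ^ m ≤ ((a + 1) / (m + 1)) ^ (m + 1) := by
  rcases ha.eq_or_lt with rfl | ha
  · rw [zero_div, zero_pow hm.ne']
    positivity
  -- Bernoulli's inequality at the `x` with `1 + (m + 1) x = 1 / s`, `s (1 + x) = (a + 1) / (m + 1)`
  set s : ℝ := a / m
  have hs : 0 < s := by positivity
  set x : ℝ := (1 / s - 1) / (m + 1)
  have hx : -2 ≤ x := by
    have : -1 ≤ x := by rw [le_div_iff₀ (by positivity)]; nlinarith [one_div_pos.2 hs]
    linarith
  have hbern := one_add_mul_le_pow hx (m + 1)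
  have hmx : 1 + ((m + 1 : ℕ) : ℝ) * x = 1 / s := by simp only [x]; push_cast; field_simp; ring
  have hsx : s * (1 + x) = (a + 1) / (m + 1) := by simp only [s, x]; field_simp; ring
  rw [hmx] at hbern
  calc s ^ m = s ^ (m + 1) * (1 / s) := by field_simp; ring
    _ ≤ s ^ (m + 1) * (1 + x) ^ (m + 1) := by gcongr
    _ = ((a + 1) / (m + 1)) ^ (m + 1) := by rw [← mul_pow, hsx]

theorem Real.hasSum_pow_div_factorial_mul_pow (c t : ℝ) :
    HasSum (fun l => c ^ l / l ! * t ^ l) (exp (c * t)) := by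
  have hterm : (fun l => c ^ l / l ! * t ^ l) = fun l => (c * t) ^ l / l ! := by
    ext l
    ring
  rw [hterm, Real.exp_eq_exp_ℝ]
  exact NormedSpace.expSeries_div_hasSum_exp (c * t)

theorem lamConst_succ_of_pos {m : ℕ} (hm : 0 < m) :
    lamConst (m + 1) = (m : ℝ) ^ m / (((m : ℝ) + 1) / 2) ^ (m + 1) := by
  unfold lamConst
  split_ifs with h
  · obtain rfl : m = 1 := by omega
    norm_num
  · push_cast
    simp

theorem pow_le_lamConst_mul_pow (m l : ℕ) :
    (2 * (l : ℝ) + 1) ^ m ≤ lamConst (m + 1) * ((l : ℝ) + 1) ^ (m + 1) := by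
  rcases Nat.eq_zero_or_pos m with rfl | hm
  · simp [lamConst]
  have hamgm := div_pow_le_add_one_div_pow hm (by positivity : (0 : ℝ) ≤ 2 * l + 1)
  rw [div_pow, div_le_iff₀ (by positivity)] at hamgm
  rw [lamConst_succ_of_pos hm]
  calc (2 * (l : ℝ) + 1) ^ m ≤ ((2 * l + 1 + 1) / (m + 1)) ^ (m + 1) * m ^ m := hamgm
    _ = _ := by
      rw [show (2 * (l : ℝ) + 1 + 1) / (m + 1) = (l + 1) / ((m + 1) / 2) by field_simp; ring,
        div_pow]
      ring

theorem lamConst_pos (n : ℕ) : 0 < lamConst n := by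
  unfold lamConst
  split_ifs with h
  · exact one_pos
  · have : (3 : ℝ) ≤ n := by exact_mod_cast (by omega : 3 ≤ n)
    have : (0 : ℝ) < n - 1 := by linarith
    positivity

noncomputable def scriptICoeff (n l : ℕ) : ℝ :=
  ((2 * l)! : ℝ) ^ (n - 1) / ((l ! : ℝ) ^ (2 * n) * 2 ^ (2 * l * n))

theorem scriptI_eq_tsum (n : ℕ) (z : ℝ) : scriptI n z = ∑' l, scriptICoeff n l * (z ^ 2) ^ l := by
  unfold scriptI scriptICoeff
  congr 1 with l
  rw [← pow_mul, mul_div_assoc, mul_comm]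

theorem scriptICoeff_pos (n l : ℕ) : 0 < scriptICoeff n l := by
  unfold scriptICoeff
  positivity

theorem scriptICoeff_zero (n : ℕ) : scriptICoeff n 0 = 1 := by
  simp [scriptICoeff]

theorem scriptICoeff_succ (m l : ℕ) :
    scriptICoeff (m + 1) (l + 1) =
      scriptICoeff (m + 1) l * ((2 * l + 1) ^ m / (((l : ℝ) + 1) ^ (m + 2) * 2 ^ (m + 2))) := by
  unfold scriptICoeff
  rw [show 2 * (l + 1) = 2 * l + 1 + 1 by ring, Nat.factorial_succ, Nat.factorial_succ,
    Nat.factorial_succ]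
  push_cast
  rw [show 2 * (l : ℝ) + 1 + 1 = 2 * ((l : ℝ) + 1) by ring]
  have hu : (0 : ℝ) < l + 1 := by positivity
  generalize (l : ℝ) + 1 = u at hu ⊢
  simp only [mul_pow]
  field_simp
  ring

theorem monotone_pow_div_factorial_div_scriptICoeff (m : ℕ) :
    Monotone fun l => (lamConst (m + 1) / 2 ^ (m + 2)) ^ l / l ! / scriptICoeff (m + 1) l := by
  refine monotone_nat_of_le_succ fun l => ?_
  have hlam := lamConst_pos (m + 1)
  set c := lamConst (m + 1) / 2 ^ (m + 2) with hc
  set q : ℝ := (2 * l + 1) ^ m / (((l : ℝ) + 1) ^ (m + 2) * 2 ^ (m + 2))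
  have ha := scriptICoeff_pos (m + 1) l
  have hq : q ≤ c / (l + 1) := by
    rw [div_le_div_iff₀ (by positivity) (by positivity)]
    calc (2 * (l : ℝ) + 1) ^ m * (l + 1)
        ≤ lamConst (m + 1) * ((l : ℝ) + 1) ^ (m + 1) * (l + 1) := by
          gcongr
          exact pow_le_lamConst_mul_pow m l
      _ = c * (((l : ℝ) + 1) ^ (m + 2) * 2 ^ (m + 2)) := by rw [hc]; field_simp; ring
  rw [scriptICoeff_succ, pow_succ, Nat.factorial_succ, Nat.cast_mul]
  calc c ^ l / l ! / scriptICoeff (m + 1) l = c ^ l / l ! / scriptICoeff (m + 1) l * 1 := by ring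
    _ ≤ c ^ l / l ! / scriptICoeff (m + 1) l * (c / (l + 1) / q) := by
      gcongr
      rw [one_le_div (by positivity)]
      exact hq
    _ = _ := by simp only [q]; push_cast; field_simp

theorem scriptICoeff_le_pow_div_factorial (m l : ℕ) :
    scriptICoeff (m + 1) l ≤ (lamConst (m + 1) / 2 ^ (m + 2)) ^ l / l ! := by
  have h := monotone_pow_div_factorial_div_scriptICoeff m (Nat.zero_le l)
  simp only [pow_zero, Nat.factorial_zero, Nat.cast_one, scriptICoeff_zero, div_one] at h
  rwa [one_le_div (scriptICoeff_pos _ _)] at h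

theorem summable_scriptICoeff_mul_pow (m : ℕ) {t : ℝ} (ht : 0 ≤ t) :
    Summable fun l => scriptICoeff (m + 1) l * t ^ l :=
  (Real.hasSum_pow_div_factorial_mul_pow _ t).summable.of_nonneg_of_le
    (fun l => by have := scriptICoeff_pos (m + 1) l; positivity)
    (fun l => by gcongr; exact scriptICoeff_le_pow_div_factorial m l)

theorem one_le_scriptI (m : ℕ) (z : ℝ) : 1 ≤ scriptI (m + 1) z := by
  rw [scriptI_eq_tsum]
  calc (1 : ℝ) = scriptICoeff (m + 1) 0 * (z ^ 2) ^ 0 := by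
        rw [scriptICoeff_zero, pow_zero, one_mul]
    _ ≤ _ := (summable_scriptICoeff_mul_pow m (sq_nonneg z)).le_tsum 0
      (fun l _ => by have := scriptICoeff_pos (m + 1) l; positivity)

theorem scriptI_pos (m : ℕ) (z : ℝ) : 0 < scriptI (m + 1) z :=
  one_pos.trans_le (one_le_scriptI m z)

theorem scriptI_zero (n : ℕ) : scriptI n 0 = 1 := by
  rw [scriptI_eq_tsum, tsum_eq_single 0 (fun l hl => by simp [hl]), scriptICoeff_zero]
  simp

theorem monotoneOn_exp_div_scriptI (m : ℕ) :
    MonotoneOn (fun z => exp (lamConst (m + 1) * z ^ 2 / 2 ^ (m + 2)) / scriptI (m + 1) z)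
      (Set.Ici 0) := by
  intro x hx y hy hxy
  have hlam := lamConst_pos (m + 1)
  set c := lamConst (m + 1) / 2 ^ (m + 2) with hc
  have hexp (z : ℝ) :
      exp (lamConst (m + 1) * z ^ 2 / 2 ^ (m + 2)) = ∑' l, c ^ l / l ! * (z ^ 2) ^ l := by
    rw [(Real.hasSum_pow_div_factorial_mul_pow c (z ^ 2)).tsum_eq, hc]
    ring_nf
  have hsum (t : ℝ) := (Real.hasSum_pow_div_factorial_mul_pow c t).summable
  dsimp only
  rw [div_le_div_iff₀ (scriptI_pos m x) (scriptI_pos m y), hexp, hexp, scriptI_eq_tsum,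
    scriptI_eq_tsum]
  exact tsum_mul_tsum_le_of_monotone_div (scriptICoeff_pos _) (fun l => by positivity)
    (monotone_pow_div_factorial_div_scriptICoeff m) (sq_nonneg x) (pow_le_pow_left₀ hx hxy 2)
    (summable_scriptICoeff_mul_pow m (sq_nonneg x)) (summable_scriptICoeff_mul_pow m (sq_nonneg y))
    (hsum _) (hsum _)

theorem exp_quotient_scriptI_monotone (n : ℕ) (hn : 1 ≤ n) :
    MonotoneOn (fun z => Real.exp (lamConst n * z ^ 2 / 2 ^ (n + 1)) / scriptI n z)
      (Set.Ici (0 : ℝ)) ∧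
    (∀ z ≥ (0 : ℝ), 0 ≤ lamConst n * z ^ 2 / 2 ^ (n + 1) - Real.log (scriptI n z)) ∧
    MonotoneOn (fun z => lamConst n * z ^ 2 / 2 ^ (n + 1) - Real.log (scriptI n z))
      (Set.Ici (0 : ℝ)) ∧
    lamConst n * (0 : ℝ) ^ 2 / 2 ^ (n + 1) - Real.log (scriptI n 0) = 0 := by
  obtain ⟨m, rfl⟩ := Nat.exists_eq_add_of_le' hn
  have hQ := monotoneOn_exp_div_scriptI m
  have hlog (z : ℝ) : lamConst (m + 1) * z ^ 2 / 2 ^ (m + 1 + 1) - log (scriptI (m + 1) z) =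
      log (exp (lamConst (m + 1) * z ^ 2 / 2 ^ (m + 1 + 1)) / scriptI (m + 1) z) := by
    rw [log_div (exp_ne_zero _) (scriptI_pos m z).ne', log_exp]
  have hG : MonotoneOn (fun z => lamConst (m + 1) * z ^ 2 / 2 ^ (m + 1 + 1) -
      log (scriptI (m + 1) z)) (Set.Ici 0) := fun x hx y hy hxy => by
    simp only [hlog]
    exact log_le_log (div_pos (exp_pos _) (scriptI_pos m x)) (hQ hx hy hxy)
  have hG0 : lamConst (m + 1) * (0 : ℝ) ^ 2 / 2 ^ (m + 1 + 1) - log (scriptI (m + 1) 0) = 0 := by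
    simp [scriptI_zero]
  exact ⟨hQ, fun z hz => hG0 ▸ hG Set.self_mem_Ici hz hz, hG, hG0⟩
end
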